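/- Every linear functional φ on the polynomials of degree ≤ 2n that is feasible at order n satisfies |φ(x^α)| ≤ 1 for every monomial x^α with |α| ≤ 2n; in particular φ(x_i^{2n}) ≤ 1 for every i = 1,…,d. -/

import Mathlib

open MvPolynomial Finset

noncomputable section

/-- The Hessian of a polynomial, as a matrix with polynomial entries. -/
def polyHessian {d : ℕ} (p : MvPolynomial (Fin d) ℝ) :
    Matrix (Fin d) (Fin d) (MvPolynomial (Fin d) ℝ) :=
  Matrix.of fun i j => pderiv i (pderiv j p)

/-- A polynomial is a sum of squares (SOS). -/
def IsSOS {σ : Type} (p : MvPolynomial σ ℝ) : Prop :=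
  ∃ (s : ℕ) (q : Fin s → MvPolynomial σ ℝ), p = ∑ k, q k ^ 2

/-- A polynomial `g` is SOS-concave: `-∇²g = L Lᵀ` for some polynomial matrix `L`. -/
def IsSOSConcave {d : ℕ} (g : MvPolynomial (Fin d) ℝ) : Prop :=
  ∃ (r : ℕ) (L : Matrix (Fin d) (Fin r) (MvPolynomial (Fin d) ℝ)),
    -polyHessian g = L * L.transpose

/-- Standing assumptions: `g 0 = 1`, the last constraint is `1 - ‖x‖²`,
and every `g j`, `j = 1,…,m+1`, is SOS-concave. -/
def GoodConstraints {d m : ℕ} (g : Fin (m + 2) → MvPolynomial (Fin d) ℝ) : Prop :=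
  g 0 = 1 ∧ g (Fin.last (m + 1)) = 1 - ∑ i : Fin d, X i ^ 2 ∧
    ∀ j : Fin (m + 2), j ≠ 0 → IsSOSConcave (g j)

/-- The feasible set `Ω = {x : g j (x) ≥ 0 ∀ j}` (the condition for `j = 0` is vacuous
since `g 0 = 1`). -/
def OmegaSet {d m : ℕ} (g : Fin (m + 2) → MvPolynomial (Fin d) ℝ) : Set (Fin d → ℝ) :=
  {x | ∀ j : Fin (m + 2), 0 ≤ eval x (g j)}

/-- `⌈deg p / 2⌉`. -/
def degHalf {d : ℕ} (p : MvPolynomial (Fin d) ℝ) : ℕ := (p.totalDegree + 1) / 2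

/-- A linear functional on polynomials (its values on degrees ≤ 2n are the only ones
constrained) is feasible at order `n` if `φ(1) = 1` and `φ(p² gⱼ) ≥ 0` for all `j`
and all `p` with `deg p ≤ n - dⱼ`. -/
def Feasible {d m : ℕ} (g : Fin (m + 2) → MvPolynomial (Fin d) ℝ) (n : ℕ)
    (φ : MvPolynomial (Fin d) ℝ →ₗ[ℝ] ℝ) : Prop :=
  φ 1 = 1 ∧ ∀ j : Fin (m + 2), ∀ p : MvPolynomial (Fin d) ℝ,
    p.totalDegree ≤ n - degHalf (g j) → 0 ≤ φ (p ^ 2 * g j)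

/-- The point `φ(x) = (φ(x₁),…,φ(x_d))`. -/
def phiPoint {d : ℕ} (φ : MvPolynomial (Fin d) ℝ →ₗ[ℝ] ℝ) : Fin d → ℝ :=
  fun i => φ (X i)

/-- `f` is strongly convex on `S`: `∇²f(x) - μI ⪰ 0` on `S` for some `μ > 0`. -/
def StronglyConvexOnSet {d : ℕ} (f : MvPolynomial (Fin d) ℝ) (S : Set (Fin d → ℝ)) : Prop :=
  ∃ μ : ℝ, 0 < μ ∧ ∀ x ∈ S,
    Matrix.PosSemidef ((polyHessian f).map (fun p => eval x p)
      - μ • (1 : Matrix (Fin d) (Fin d) ℝ))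

/-- `f` is SOS-convex on `Ω`: `∇²f = Σⱼ gⱼ · Lⱼ Lⱼᵀ`. -/
def IsSOSConvexOnOmega {d m : ℕ} (g : Fin (m + 2) → MvPolynomial (Fin d) ℝ)
    (f : MvPolynomial (Fin d) ℝ) : Prop :=
  ∃ (r : Fin (m + 2) → ℕ)
    (L : ∀ j, Matrix (Fin d) (Fin (r j)) (MvPolynomial (Fin d) ℝ)),
    polyHessian f = ∑ j, g j • (L j * (L j).transpose)

/-- `n_min = max{⌈deg f/2⌉, max_{j=1,…,m+1} dⱼ}`. -/
def nMin {d m : ℕ} (g : Fin (m + 2) → MvPolynomial (Fin d) ℝ)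
    (f : MvPolynomial (Fin d) ℝ) : ℕ :=
  max (degHalf f) (((univ : Finset (Fin (m + 2))).erase 0).sup fun j => degHalf (g j))

/-- `ρₙ = inf {φ(f) : φ feasible at order n}`. -/
def rho {d m : ℕ} (g : Fin (m + 2) → MvPolynomial (Fin d) ℝ)
    (f : MvPolynomial (Fin d) ℝ) (n : ℕ) : ℝ :=
  sInf {r : ℝ | ∃ φ : MvPolynomial (Fin d) ℝ →ₗ[ℝ] ℝ, Feasible g n φ ∧ φ f = r}

/-- `f* = min_{x ∈ Ω} f(x)`. -/
def fstar {d m : ℕ} (g : Fin (m + 2) → MvPolynomial (Fin d) ℝ)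
    (f : MvPolynomial (Fin d) ℝ) : ℝ :=
  sInf ((fun x => eval x f) '' OmegaSet g)

/-! The constraint `g₀ = 1` makes `φ` nonnegative on squares of degree `≤ n`, and the ball
constraint gives `φ(p²) ≥ ∑ᵢ φ((p xᵢ)²)` for `deg p < n`; hence `φ((x^β)²) ≤ φ(1) = 1` for
`|β| ≤ n`, by induction on `|β|`. Splitting `x^α = x^γ x^δ` with `|γ|, |δ| ≤ n`, the bound
`2|φ(pq)| ≤ φ(p²) + φ(q²)`, which comes from `φ((p ± q)²) ≥ 0`, gives `|φ(x^α)| ≤ 1`. -/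

theorem two_mul_abs_map_mul_le {R : Type*} [CommRing R] [Module ℝ R] (φ : R →ₗ[ℝ] ℝ) {p q : R}
    (hadd : 0 ≤ φ ((p + q) ^ 2)) (hsub : 0 ≤ φ ((p - q) ^ 2)) :
    2 * |φ (p * q)| ≤ φ (p ^ 2) + φ (q ^ 2) := by
  rw [show (p + q) ^ 2 = p ^ 2 + q ^ 2 + (p * q + p * q) by ring, map_add, map_add,
    map_add] at hadd
  rw [show (p - q) ^ 2 = p ^ 2 + q ^ 2 - (p * q + p * q) by ring, map_sub, map_add,
    map_add] at hsub
  rcases abs_cases (φ (p * q)) with ⟨h, -⟩ | ⟨h, -⟩ <;> linarith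

namespace MvPolynomial

variable {σ : Type*}

theorem totalDegree_monomial_le_degree {R : Type*} [CommSemiring R] (β : σ →₀ ℕ) (c : R) :
    (monomial β c).totalDegree ≤ β.degree :=
  totalDegree_monomial_le β c

theorem totalDegree_one_sub_sum_X_sq_le [Fintype σ] :
    (1 - ∑ i, X i ^ 2 : MvPolynomial σ ℝ).totalDegree ≤ 2 := by
  refine (totalDegree_sub _ _).trans (max_le (by simp) ?_)
  exact (totalDegree_finsetSum _ _).trans (Finset.sup_le fun i _ => by simp)

end MvPolynomial

section MomentBounds

variable {σ : Type*} [Fintype σ] (φ : MvPolynomial σ ℝ →ₗ[ℝ] ℝ) {n : ℕ}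

theorem map_mul_X_sq_le
    (hsq : ∀ p : MvPolynomial σ ℝ, p.totalDegree ≤ n → 0 ≤ φ (p ^ 2))
    (hball : ∀ p : MvPolynomial σ ℝ, p.totalDegree ≤ n - 1 →
      0 ≤ φ (p ^ 2 * (1 - ∑ i, X i ^ 2)))
    {p : MvPolynomial σ ℝ} (hp : p.totalDegree + 1 ≤ n) (i : σ) :
    φ ((p * X i) ^ 2) ≤ φ (p ^ 2) := by
  have hdeg : ∀ j, (p * X j).totalDegree ≤ n := fun j =>
    (totalDegree_mul _ _).trans (by simpa using hp)
  have hloc := hball p (by omega)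
  rw [mul_sub, mul_one, mul_sum, map_sub, map_sum] at hloc
  calc φ ((p * X i) ^ 2) ≤ ∑ j, φ ((p * X j) ^ 2) :=
        single_le_sum (fun j _ => hsq _ (hdeg j)) (mem_univ i)
    _ = ∑ j, φ (p ^ 2 * X j ^ 2) := by simp only [mul_pow]
    _ ≤ φ (p ^ 2) := by linarith

theorem map_monomial_sq_le_one
    (hsq : ∀ p : MvPolynomial σ ℝ, p.totalDegree ≤ n → 0 ≤ φ (p ^ 2))
    (hball : ∀ p : MvPolynomial σ ℝ, p.totalDegree ≤ n - 1 →
      0 ≤ φ (p ^ 2 * (1 - ∑ i, X i ^ 2)))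
    (hφ1 : φ 1 = 1) {β : σ →₀ ℕ} (hβ : β.degree ≤ n) :
    φ (monomial β 1 ^ 2) ≤ 1 := by
  induction hk : β.degree generalizing β with
  | zero => simp [(Finsupp.degree_eq_zero_iff β).mp hk, hφ1]
  | succ k ih =>
    obtain ⟨γ, hγβ, hγ⟩ := β.exists_le_degree_eq k (by omega)
    obtain ⟨δ, rfl⟩ := le_iff_exists_add.mp hγβ
    have hδ : δ.degree = 1 := by simp only [map_add] at hk; omega
    obtain ⟨i, rfl⟩ : δ ∈ Set.range (Finsupp.single · 1) := Finsupp.range_single_one ▸ hδ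
    have hγn : (monomial γ (1 : ℝ)).totalDegree + 1 ≤ n :=
      (totalDegree_monomial_le_degree γ (1 : ℝ)).trans_lt (by omega)
    rw [monomial_add_single, pow_one]
    calc φ ((monomial γ 1 * X i) ^ 2) ≤ φ (monomial γ 1 ^ 2) :=
          map_mul_X_sq_le φ hsq hball hγn i
      _ ≤ 1 := ih (by omega) hγ

theorem abs_map_monomial_le_one
    (hsq : ∀ p : MvPolynomial σ ℝ, p.totalDegree ≤ n → 0 ≤ φ (p ^ 2))
    (hball : ∀ p : MvPolynomial σ ℝ, p.totalDegree ≤ n - 1 →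
      0 ≤ φ (p ^ 2 * (1 - ∑ i, X i ^ 2)))
    (hφ1 : φ 1 = 1) {α : σ →₀ ℕ} (hα : α.degree ≤ 2 * n) :
    |φ (monomial α 1)| ≤ 1 := by
  obtain ⟨γ, hγα, hγ⟩ := α.exists_le_degree_eq (min n α.degree) (min_le_right _ _)
  obtain ⟨δ, rfl⟩ := le_iff_exists_add.mp hγα
  have hδ : δ.degree ≤ n := by simp only [map_add] at hα hγ ⊢; omega
  have hγn : γ.degree ≤ n := by omega
  have hp := (totalDegree_monomial_le_degree γ (1 : ℝ)).trans hγn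
  have hq := (totalDegree_monomial_le_degree δ (1 : ℝ)).trans hδ
  have := two_mul_abs_map_mul_le φ
    (hsq _ ((totalDegree_add _ _).trans (max_le hp hq)))
    (hsq _ ((totalDegree_sub _ _).trans (max_le hp hq)))
  rw [monomial_mul, one_mul] at this
  linarith [map_monomial_sq_le_one φ hsq hball hφ1 hγn,
    map_monomial_sq_le_one φ hsq hball hφ1 hδ]

end MomentBounds

namespace Feasible

variable {d m n : ℕ} {g : Fin (m + 2) → MvPolynomial (Fin d) ℝ}
  {φ : MvPolynomial (Fin d) ℝ →ₗ[ℝ] ℝ}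

theorem map_sq_nonneg (hφ : Feasible g n φ) (hg : g 0 = 1) {p : MvPolynomial (Fin d) ℝ}
    (hp : p.totalDegree ≤ n) : 0 ≤ φ (p ^ 2) := by
  simpa [hg, degHalf] using hφ.2 0 p (by simpa [hg, degHalf] using hp)

theorem map_sq_mul_one_sub_sum_X_sq_nonneg (hφ : Feasible g n φ)
    (hg : g (Fin.last (m + 1)) = 1 - ∑ i, X i ^ 2) {p : MvPolynomial (Fin d) ℝ}
    (hp : p.totalDegree ≤ n - 1) : 0 ≤ φ (p ^ 2 * (1 - ∑ i, X i ^ 2)) := by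
  have hdeg : degHalf (g (Fin.last (m + 1))) ≤ 1 := by
    have := hg ▸ totalDegree_one_sub_sum_X_sq_le (σ := Fin d)
    unfold degHalf
    omega
  exact hg ▸ hφ.2 _ p (by omega)

end Feasible

/-- Every feasible `φ` at order `n` satisfies `|φ(x^α)| ≤ 1` for every
monomial of degree `≤ 2n`; in particular `φ(xᵢ^{2n}) ≤ 1` for every `i`. -/
theorem moments_bounded {d m : ℕ}
    (g : Fin (m + 2) → MvPolynomial (Fin d) ℝ) (hg : GoodConstraints g)
    (n : ℕ) (φ : MvPolynomial (Fin d) ℝ →ₗ[ℝ] ℝ) (hφ : Feasible g n φ) :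
    (∀ α : Fin d →₀ ℕ, (∑ i, α i) ≤ 2 * n → |φ (monomial α (1 : ℝ))| ≤ 1) ∧
    ∀ i : Fin d, φ (X i ^ (2 * n)) ≤ 1 := by
  obtain ⟨hg0, hlast, -⟩ := hg
  have key : ∀ α : Fin d →₀ ℕ, α.degree ≤ 2 * n → |φ (monomial α 1)| ≤ 1 := fun α =>
    abs_map_monomial_le_one φ (fun _ => hφ.map_sq_nonneg hg0)
      (fun _ => hφ.map_sq_mul_one_sub_sum_X_sq_nonneg hlast) hφ.1
  refine ⟨fun α hα => key α (by rwa [Finsupp.degree_eq_sum]), fun i => ?_⟩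
  rw [X_pow_eq_monomial]
  exact (le_abs_self _).trans (key _ (Finsupp.degree_single i _).le)
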